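/- arXiv:2108.03895 — 6 statements merged into one kernel-verified Lean document; each statement's English description precedes it below -/
import Mathlib

section
/- If G is a simple graph on n vertices that contains no path on k vertices as a subgraph (k ≥ 3), then the number of edges of G is at most (k-2)n/2, with equality if and only if G is a disjoint union of copies of the complete graph K_{k-1}. -/
open SimpleGraph Finset

attribute [local instance] Classical.propDecidable

noncomputable def signlessLaplacian {V : Type*} [Fintype V] [DecidableEq V] (G : SimpleGraph V) : Matrix V V ℝ :=
  Matrix.diagonal (fun v => (G.degree v : ℝ)) + G.adjMatrix ℝ

/-- The signless Laplacian spectral radius: the largest (real) eigenvalue of Q(G). -/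
noncomputable def qspec {V : Type*} [Fintype V] [DecidableEq V] (G : SimpleGraph V) : ℝ :=
  sSup {μ : ℝ | ∃ x : V → ℝ, x ≠ 0 ∧ (signlessLaplacian G).mulVec x = μ • x}

/-- `S_{n,t}`: the join of a clique on the first `t` vertices with an independent set. -/
def Snt (n t : ℕ) : SimpleGraph (Fin n) :=
  SimpleGraph.fromRel (fun i j => (i : ℕ) < t ∨ (j : ℕ) < t)

/-- `G` contains a copy of `H` as a subgraph. -/
def Contains {W V : Type*} (H : SimpleGraph W) (G : SimpleGraph V) : Prop :=
  ∃ f : H →g G, Function.Injective f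

/-- `G` contains vertex-disjoint paths on `2 * a i` vertices, for `i : Fin k`. -/
def ContainsDisjPaths {V : Type*} (G : SimpleGraph V) {k : ℕ} (a : Fin k → ℕ) : Prop :=
  ∃ f : ∀ i : Fin k, Fin (2 * a i) → V,
    (∀ i, Function.Injective (f i)) ∧
    (∀ i j, i ≠ j → ∀ x y, f i x ≠ f j y) ∧
    (∀ i x y, (SimpleGraph.pathGraph (2 * a i)).Adj x y → G.Adj (f i x) (f i y))

/-!
Induction on the number of vertices. If some vertex `v` has `2 * deg v ≤ k - 2`, delete it. In
the equality case `G - v` is a disjoint union of copies of `K_{k-1}` and `v` has a neighbour `w`;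
then `v` followed by the clique of `w` is a path on `k` vertices, which is impossible.

Otherwise every vertex has `2 * deg v ≥ k - 1`, and every component has fewer than `k` vertices
(Dirac–Pósa): take a longest path `x₀ ⋯ x_{L-1}` inside a component. Its ends have all their
neighbours on it and `deg x₀ + deg x_{L-1} ≥ k - 1 ≥ L`, so by pigeonhole `x₀ ~ x_{j+1}` and
`x_{L-1} ~ x_j` for some `j`. Hence the path's vertices lie on a cycle, and an edge leaving that
cycle would yield a longer path. So every degree is smaller than the size of its component, hence
at most `k - 2`, with equality everywhere exactly when every component is a `K_{k-1}`.
-/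

lemma List.Nodup.injOn_getD {α : Type*} {l : List α} (hl : l.Nodup) (d : α) :
    Set.InjOn (l.getD · d) (Finset.range l.length) := by
  intro i hi j hj hij
  simp only [Finset.coe_range, Set.mem_Iio] at hi hj
  simp only [List.getD_eq_getElem _ _ hi, List.getD_eq_getElem _ _ hj] at hij
  exact hl.getElem_inj_iff.1 hij

lemma Setoid.exists_equiv_fin_prod {α : Type*} [Fintype α] (s : Setoid α) {c : ℕ}
    (hc : ∀ a, #{b | s a b} = c) :
    ∃ m, ∃ e : α ≃ Fin m × Fin c, ∀ a b, s a b ↔ (e a).1 = (e b).1 := by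
  have hfiber : ∀ q : Quotient s, Fintype.card {a // Quotient.mk s a = q} = c := by
    refine Quotient.ind fun a ↦ ?_
    rw [Fintype.card_subtype, ← hc a]
    congr 1
    ext b
    simp [Quotient.eq, Setoid.comm' s]
  let e : α ≃ Fin (Fintype.card (Quotient s)) × Fin c :=
    (Equiv.sigmaFiberEquiv (Quotient.mk s)).symm.trans <|
      (Equiv.sigmaCongrRight fun q ↦ Fintype.equivFinOfCardEq (hfiber q)).trans <|
        (Equiv.sigmaEquivProd _ _).trans <| Equiv.prodCongr (Fintype.equivFin _) (Equiv.refl _)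
  exact ⟨_, e, fun a b ↦ by simp [e, Quotient.eq]⟩

lemma Contains.map {W V V' : Type*} {H : SimpleGraph W} {G : SimpleGraph V}
    {G' : SimpleGraph V'} (h : Contains H G) (f : G ↪g G') : Contains H G' :=
  let ⟨g, hg⟩ := h
  ⟨f.toHom.comp g, f.injective.comp hg⟩

namespace SimpleGraph

variable {V : Type*} {G : SimpleGraph V}

def IsPathList (G : SimpleGraph V) (l : List V) : Prop :=
  l.Nodup ∧ l.IsChain G.Adj

namespace IsPathList

variable {l : List V}

lemma cons {w : V} (hl : G.IsPathList l) (hw : w ∉ l) (h : ∀ x ∈ l.head?, G.Adj w x) :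
    G.IsPathList (w :: l) :=
  ⟨List.nodup_cons.2 ⟨hw, hl.1⟩, hl.2.cons h⟩

lemma reverse (hl : G.IsPathList l) : G.IsPathList l.reverse :=
  ⟨List.nodup_reverse.2 hl.1, List.isChain_reverse.2 (hl.2.imp fun _ _ h ↦ h.symm)⟩

lemma map {W : Type*} {H : SimpleGraph W} (f : G ↪g H) (hl : G.IsPathList l) :
    H.IsPathList (l.map f) :=
  ⟨hl.1.map f.injective, List.isChain_map_of_isChain f (fun _ _ h ↦ f.map_adj_iff.2 h) hl.2⟩

lemma contains_pathGraph {k : ℕ} (hl : G.IsPathList l) (hk : k ≤ l.length) :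
    Contains (pathGraph k) G := by
  refine ⟨⟨fun i ↦ l[i.val], fun {i j} hij ↦ ?_⟩, fun i j hij ↦ Fin.ext ?_⟩
  · rcases pathGraph_adj.1 hij with h | h
    · simp only [← h]
      exact List.isChain_iff_getElem.1 hl.2 i (by omega)
    · simp only [← h]
      exact (List.isChain_iff_getElem.1 hl.2 j (by omega)).symm
  · exact hl.1.getElem_inj_iff.1 hij

lemma rotate {s t : List V} (hl : G.IsPathList (s ++ t))
    (hcyc : ∀ a ∈ (s ++ t).getLast?, ∀ b ∈ (s ++ t).head?, G.Adj a b) :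
    G.IsPathList (t ++ s) := by
  refine ⟨List.perm_append_comm.nodup_iff.1 hl.1,
    hl.2.right_of_append.append hl.2.left_of_append fun a ha b hb ↦ hcyc a ?_ b ?_⟩
  · simpa [List.getLast?_append] using Or.inl ha
  · simpa [List.head?_append] using Or.inl hb

lemma exists_perm_cons_of_cyclic {u w : V} (hl : G.IsPathList l)
    (hcyc : ∀ a ∈ l.getLast?, ∀ b ∈ l.head?, G.Adj a b) (hu : u ∈ l) (hw : w ∉ l)
    (hwu : G.Adj w u) : ∃ l', l'.Perm (w :: l) ∧ G.IsPathList l' := by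
  obtain ⟨s, t, rfl⟩ := List.append_of_mem hu
  refine ⟨w :: ((u :: t) ++ s), List.perm_append_comm.cons w,
    (hl.rotate hcyc).cons (fun h ↦ hw ?_) (by simpa using hwu)⟩
  exact List.perm_append_comm.mem_iff.1 h

end IsPathList

lemma degree_eq_card_filter [Fintype V] [DecidableRel G.Adj] {x : V} (f : ℕ → V) {n : ℕ}
    (hf : Set.InjOn f (range n)) (hN : ∀ y, G.Adj x y → ∃ j < n, f j = y) :
    G.degree x = #{j ∈ range n | G.Adj x (f j)} := by
  rw [← card_neighborFinset_eq_degree]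
  symm
  apply card_nbij f
  · intro j hj
    simpa using (mem_filter.1 hj).2
  · exact hf.mono fun j hj ↦ (mem_filter.1 hj).1
  · intro y hy
    obtain ⟨j, hj, rfl⟩ := hN y (by simpa using hy)
    exact ⟨j, by simpa [hj] using hy, rfl⟩

lemma exists_adj_getElem_succ_adj_getElem [Fintype V] [DecidableRel G.Adj] {l : List V}
    {x y : V} (hl : l.Nodup) (hx : l.head? = some x) (hy : l.getLast? = some y)
    (hNx : ∀ z, G.Adj x z → z ∈ l) (hNy : ∀ z, G.Adj y z → z ∈ l)
    (hdeg : l.length ≤ G.degree x + G.degree y) :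
    ∃ j, ∃ hj : j + 1 < l.length, G.Adj x l[j + 1] ∧ G.Adj y l[j] := by
  have hL : 0 < l.length := List.length_pos_iff.2 (by rintro rfl; simp at hx)
  have hx0 : l[0] = x := by simpa [List.head?_eq_getElem?, hL] using hx
  have hyL : l[l.length - 1] = y := by simpa [List.getLast?_eq_getElem?, hL] using hy
  set A := filter (fun j ↦ G.Adj x (l.getD (j + 1) x)) (range (l.length - 1))
  set B := filter (fun j ↦ G.Adj y (l.getD j y)) (range (l.length - 1))
  have hA : G.degree x = #A := by
    refine degree_eq_card_filter _ (fun i hi j hj hij ↦ ?_) fun z hz ↦ ?_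
    · simp only [coe_range, Set.mem_Iio] at hi hj
      have := hl.injOn_getD x (by simp; omega) (by simp; omega) hij
      omega
    · obtain ⟨i, hi, rfl⟩ := List.getElem_of_mem (hNx z hz)
      have : i ≠ 0 := by rintro rfl; exact hz.ne hx0.symm
      exact ⟨i - 1, by omega, by rw [List.getD_eq_getElem _ _ (by omega)]; congr 1; omega⟩
  have hB : G.degree y = #B := by
    refine degree_eq_card_filter _ (fun i hi j hj hij ↦ ?_) fun z hz ↦ ?_
    · simp only [coe_range, Set.mem_Iio] at hi hj
      exact hl.injOn_getD y (by simp; omega) (by simp; omega) hij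
    · obtain ⟨i, hi, rfl⟩ := List.getElem_of_mem (hNy z hz)
      have : i ≠ l.length - 1 := by rintro rfl; exact hz.ne hyL.symm
      exact ⟨i, by omega, List.getD_eq_getElem _ _ hi⟩
  obtain ⟨j, hj⟩ : (A ∩ B).Nonempty := by
    have hAB := card_union_add_card_inter A B
    have hcard := card_le_card (union_subset (filter_subset _ _) (filter_subset _ _) :
      A ∪ B ⊆ range (l.length - 1))
    rw [card_range] at hcard
    rw [← card_pos]
    omega
  simp only [A, B, mem_inter, mem_filter, mem_range] at hj
  obtain ⟨⟨hjL, hxj⟩, -, hyj⟩ := hj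
  rw [List.getD_eq_getElem _ _ (by omega)] at hxj hyj
  exact ⟨j, by omega, hxj, hyj⟩

lemma IsPathList.exists_perm_cyclic [Fintype V] [DecidableRel G.Adj] {l : List V} {x y : V}
    (hl : G.IsPathList l) (hx : l.head? = some x) (hy : l.getLast? = some y)
    (hNx : ∀ z, G.Adj x z → z ∈ l) (hNy : ∀ z, G.Adj y z → z ∈ l)
    (hdeg : l.length ≤ G.degree x + G.degree y) :
    ∃ l', l'.Perm l ∧ G.IsPathList l' ∧
      ∀ a ∈ l'.getLast?, ∀ b ∈ l'.head?, G.Adj a b := by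
  obtain ⟨j, hjL, hxj, hyj⟩ := exists_adj_getElem_succ_adj_getElem hl.1 hx hy hNx hNy hdeg
  -- `l' = x_j ⋯ x_0 x_{j+1} ⋯ x_{L-1}`
  have hperm : ((l.take (j + 1)).reverse ++ l.drop (j + 1)).Perm l :=
    ((List.reverse_perm _).append_right _).trans (by rw [List.take_append_drop])
  refine ⟨_, hperm, ⟨hperm.nodup_iff.2 hl.1, ?_⟩, fun a ha b hb ↦ ?_⟩
  · refine (List.isChain_reverse.2 ((hl.2.take _).imp fun _ _ h ↦ h.symm)).append (hl.2.drop _)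
      fun a ha b hb ↦ ?_
    simp only [List.getLast?_reverse, List.head?_take, hx, List.head?_drop, Nat.add_one_ne_zero,
      if_false, List.getElem?_eq_getElem (show j + 1 < l.length by omega), Option.mem_def,
      Option.some_inj] at ha hb
    exact ha ▸ hb ▸ hxj
  · simp only [List.getLast?_append, List.getLast?_drop, hy, List.head?_append,
      List.head?_reverse, List.getLast?_take, if_neg (show ¬ l.length ≤ j + 1 by omega),
      Nat.add_one_ne_zero, if_false, Nat.add_sub_cancel, Option.some_or,
      List.getElem?_eq_getElem (show j < l.length by omega), Option.mem_def,
      Option.some_inj] at ha hb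
    exact ha ▸ hb ▸ hyj

lemma IsPathList.card_reachable_le_length [Fintype V] [DecidableEq V] [DecidableRel G.Adj]
    {l : List V} {x x₀ y₀ : V} (hl : G.IsPathList l) (hlx : ∀ y ∈ l, G.Reachable x y)
    (hmax : ∀ l', G.IsPathList l' ∧ (∀ y ∈ l', G.Reachable x y) → l'.length ≤ l.length)
    (hx₀ : l.head? = some x₀) (hy₀ : l.getLast? = some y₀)
    (hdeg : l.length ≤ G.degree x₀ + G.degree y₀) :
    #{y | G.Reachable x y} ≤ l.length := by
  have hno_ext : ∀ w l', l'.Perm (w :: l) → G.IsPathList l' → G.Reachable x w → False := by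
    intro w l' hperm hl' hw
    have := hmax l' ⟨hl', fun y hy ↦ ?_⟩
    · simp [hperm.length_eq] at this
    · rcases List.mem_cons.1 (hperm.mem_iff.1 hy) with rfl | hy
      exacts [hw, hlx y hy]
  have hx₀l : x₀ ∈ l := List.mem_of_mem_head? hx₀
  have hNx₀ : ∀ z, G.Adj x₀ z → z ∈ l := fun z hz ↦ by_contra fun hzl ↦
    hno_ext z _ (List.Perm.refl _) (hl.cons hzl (by simpa [hx₀] using hz.symm))
      ((hlx x₀ hx₀l).trans hz.reachable)
  have hNy₀ : ∀ z, G.Adj y₀ z → z ∈ l := fun z hz ↦ by_contra fun hzl ↦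
    hno_ext z _ ((List.reverse_perm l).cons z) (hl.reverse.cons (by simpa using hzl)
      (by simpa [hy₀] using hz.symm)) ((hlx y₀ (List.mem_of_getLast? hy₀)).trans hz.reachable)
  obtain ⟨l', hperm, hl', hcyc⟩ := hl.exists_perm_cyclic hx₀ hy₀ hNx₀ hNy₀ hdeg
  by_contra! hbig
  obtain ⟨z, hz, hzl⟩ := exists_mem_notMem_of_card_lt_card (l.toFinset_card_le.trans_lt hbig)
  rw [mem_filter] at hz
  rw [List.mem_toFinset] at hzl
  obtain ⟨p⟩ := (hlx x₀ hx₀l).symm.trans hz.2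
  obtain ⟨d, -, hd₁, hd₂⟩ := p.exists_boundary_dart {y | y ∈ l} hx₀l hzl
  obtain ⟨l'', hperm', hl''⟩ := hl'.exists_perm_cons_of_cyclic hcyc (hperm.mem_iff.2 hd₁)
    (fun h ↦ hd₂ (hperm.mem_iff.1 h)) d.adj.symm
  exact hno_ext _ l'' (hperm'.trans (hperm.cons _)) hl'' ((hlx _ hd₁).trans d.adj.reachable)

lemma card_reachable_lt_of_not_contains_pathGraph [Fintype V] [DecidableEq V]
    [DecidableRel G.Adj] {k : ℕ} (hfree : ¬ Contains (pathGraph k) G)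
    (hdeg : ∀ v, k - 2 < 2 * G.degree v) (x : V) : #{y | G.Reachable x y} < k := by
  set S := {l : List V | G.IsPathList l ∧ ∀ y ∈ l, G.Reachable x y}
  have hS : S.Finite := (List.finite_length_le V (Fintype.card V)).subset
    fun l hl ↦ hl.1.1.length_le_card
  have hxS : [x] ∈ S := ⟨⟨List.nodup_singleton x, List.isChain_singleton x⟩, by simp⟩
  obtain ⟨l, ⟨hl, hlx⟩, hmax⟩ := S.exists_max_image List.length hS ⟨_, hxS⟩
  have hlk : l.length < k := lt_of_not_ge fun h ↦ hfree (hl.contains_pathGraph h)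
  have hne : l ≠ [] := List.ne_nil_of_length_pos (hmax [x] hxS)
  obtain ⟨x₀, hx₀⟩ : ∃ a, l.head? = some a := ⟨_, List.head?_eq_some_head hne⟩
  obtain ⟨y₀, hy₀⟩ : ∃ b, l.getLast? = some b :=
    ⟨_, List.getLast?_eq_some_getLast hne⟩
  refine (hl.card_reachable_le_length hlx (fun l' h ↦ hmax l' h) hx₀ hy₀ ?_).trans_lt hlk
  have := hdeg x₀
  have := hdeg y₀
  omega

lemma card_edgeFinset_eq_card_edgeFinset_induce_add_degree [Fintype V] [DecidableEq V]
    [DecidableRel G.Adj] (v : V) :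
    #G.edgeFinset = #(G.induce {v}ᶜ).edgeFinset + G.degree v := by
  rw [card_edgeFinset_induce_compl_singleton, card_edgeFinset_deleteIncidenceSet]
  have := G.degree_le_card_edgeFinset v
  omega

def IsUnionOfCliques [Fintype V] [DecidableEq V] (G : SimpleGraph V) [DecidableRel G.Adj]
    (c : ℕ) : Prop :=
  (∀ u v, G.Adj u v ↔ G.Reachable u v ∧ u ≠ v) ∧ ∀ v, #{u | G.Reachable v u} = c

lemma insert_neighborFinset_subset_reachable [Fintype V] [DecidableEq V] [DecidableRel G.Adj]
    (v : V) : insert v (G.neighborFinset v) ⊆ ({u | G.Reachable v u} : Finset V) :=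
  insert_subset (by simp) fun u hu ↦ by simpa using ((G.mem_neighborFinset v u).1 hu).reachable

lemma degree_lt_card_reachable [Fintype V] [DecidableEq V] [DecidableRel G.Adj] (v : V) :
    G.degree v < #{u | G.Reachable v u} := by
  rw [← card_neighborFinset_eq_degree, Nat.lt_iff_add_one_le,
    ← card_insert_of_notMem (by simp : v ∉ G.neighborFinset v)]
  exact card_le_card (insert_neighborFinset_subset_reachable v)

lemma two_mul_card_edgeFinset_le_of_card_reachable_le [Fintype V] [DecidableEq V]
    [DecidableRel G.Adj] {c : ℕ} (h : ∀ v, #{u | G.Reachable v u} ≤ c) :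
    2 * #G.edgeFinset ≤ (c - 1) * Fintype.card V ∧
      (2 * #G.edgeFinset = (c - 1) * Fintype.card V → G.IsUnionOfCliques c) := by
  have hdeg : ∀ v, G.degree v ≤ c - 1 := fun v ↦ by
    have := G.degree_lt_card_reachable v
    have := h v
    omega
  have hsum : 2 * #G.edgeFinset ≤ (c - 1) * Fintype.card V := calc
    2 * #G.edgeFinset = ∑ v, G.degree v := (sum_degrees_eq_twice_card_edges G).symm
    _ ≤ ∑ _v : V, (c - 1) := sum_le_sum fun v _ ↦ hdeg v
    _ = (c - 1) * Fintype.card V := by simp [mul_comm]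
  refine ⟨hsum, fun heq ↦ ?_⟩
  have hreg : ∀ v, G.degree v = c - 1 := fun v ↦
    (sum_eq_sum_iff_of_le fun v _ ↦ hdeg v).1
      (by rw [sum_degrees_eq_twice_card_edges, heq]; simp [mul_comm]) v (mem_univ v)
  have hcard : ∀ v, #{u | G.Reachable v u} = c := fun v ↦ by
    have := G.degree_lt_card_reachable v
    have := h v
    have := hreg v
    omega
  have hnbhd : ∀ v, insert v (G.neighborFinset v) = ({u | G.Reachable v u} : Finset V) :=
    fun v ↦ eq_of_subset_of_card_le (insert_neighborFinset_subset_reachable v) (by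
      rw [card_insert_of_notMem (by simp), card_neighborFinset_eq_degree, hreg, hcard]
      omega)
  refine ⟨fun u v ↦ ⟨fun huv ↦ ⟨huv.reachable, huv.ne⟩, fun ⟨huv, hne⟩ ↦ ?_⟩,
    hcard⟩
  have : v ∈ insert u (G.neighborFinset u) := hnbhd u ▸ (by simpa using huv)
  simpa [hne.symm] using this

namespace IsUnionOfCliques

variable [Fintype V] [DecidableEq V] [DecidableRel G.Adj] {c : ℕ}

lemma exists_isPathList (h : G.IsUnionOfCliques c) (w : V) :
    ∃ l, G.IsPathList l ∧ l.head? = some w ∧ l.length = c := by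
  set C : Finset V := {u | G.Reachable w u}
  have hwC : w ∈ C := by simp [C]
  have hnodup : (w :: (C.erase w).toList).Nodup := List.nodup_cons.2 ⟨by simp, nodup_toList _⟩
  have hC : ∀ x ∈ w :: (C.erase w).toList, G.Reachable w x := by simp [C]
  refine ⟨_, ⟨hnodup, List.Pairwise.isChain (hnodup.pairwise_of_forall_ne fun a ha b hb hab ↦
    (h.1 a b).2 ⟨(hC a ha).symm.trans (hC b hb), hab⟩)⟩, rfl, ?_⟩
  have hc : #C = c := h.2 w
  rw [List.length_cons, length_toList, card_erase_of_mem hwC, ← hc]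
  have := card_pos.2 ⟨w, hwC⟩
  omega

lemma exists_equiv_fin_prod (h : G.IsUnionOfCliques c) : ∃ m, ∃ e : V ≃ Fin m × Fin c,
    ∀ u v, G.Adj u v ↔ (e u).1 = (e v).1 ∧ e u ≠ e v := by
  obtain ⟨m, e, he⟩ := G.reachableSetoid.exists_equiv_fin_prod fun v ↦ by convert h.2 v; rfl
  exact ⟨m, e, fun u v ↦ by rw [h.1, e.injective.ne_iff]; exact and_congr_left' (he u v)⟩

end IsUnionOfCliques

lemma degree_eq_of_equiv_fin_prod [Fintype V] [DecidableRel G.Adj] {m c : ℕ}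
    (e : V ≃ Fin m × Fin c) (he : ∀ u v, G.Adj u v ↔ (e u).1 = (e v).1 ∧ e u ≠ e v)
    (v : V) : G.degree v = c - 1 := by
  rw [← card_neighborFinset_eq_degree, ← Fintype.card_fin c, ← card_univ,
    ← card_erase_of_mem (mem_univ (e v).2)]
  refine card_nbij (fun u ↦ (e u).2) (fun u hu ↦ ?_) (fun u hu u' hu' huu' ↦ ?_)
    fun j hj ↦ ?_
  · obtain ⟨h₁, h₂⟩ := (he v u).1 (by simpa using hu)
    simpa using fun h ↦ h₂ (Prod.ext h₁ h.symm)
  · have h₁ := ((he v u).1 (by simpa using hu)).1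
    have h₁' := ((he v u').1 (by simpa using hu')).1
    exact e.injective (Prod.ext (h₁.symm.trans h₁') huu')
  · refine ⟨e.symm ((e v).1, j), ?_, by simp⟩
    simpa [he] using fun h ↦ (mem_erase.1 hj).1 (by rw [h])

lemma two_mul_card_edgeFinset_eq_of_equiv_fin_prod [Fintype V] [DecidableRel G.Adj] {m c : ℕ}
    (e : V ≃ Fin m × Fin c) (he : ∀ u v, G.Adj u v ↔ (e u).1 = (e v).1 ∧ e u ≠ e v) :
    2 * #G.edgeFinset = (c - 1) * Fintype.card V := by
  rw [← sum_degrees_eq_twice_card_edges,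
    sum_congr rfl fun v _ ↦ degree_eq_of_equiv_fin_prod e he v]
  simp [mul_comm]

theorem two_mul_card_edgeFinset_le_of_not_contains_pathGraph [Fintype V] [DecidableEq V]
    [DecidableRel G.Adj] {k : ℕ} (hk : 3 ≤ k) (hfree : ¬ Contains (pathGraph k) G) :
    2 * #G.edgeFinset ≤ (k - 2) * Fintype.card V ∧
      (2 * #G.edgeFinset = (k - 2) * Fintype.card V → G.IsUnionOfCliques (k - 1)) := by
  induction hn : Fintype.card V using Nat.strong_induction_on generalizing V with
  | _ n ih =>
  by_cases hlow : ∃ v, 2 * G.degree v ≤ k - 2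
  · obtain ⟨v, hv⟩ := hlow
    obtain ⟨n, rfl⟩ :=
      Nat.exists_eq_add_one_of_ne_zero (hn ▸ Fintype.card_pos_iff.2 ⟨v⟩).ne'
    obtain ⟨hle, heq⟩ := ih n (by omega) (G := G.induce {v}ᶜ)
      (fun h ↦ hfree (h.map (Embedding.induce _)))
      (by rw [Fintype.card_compl_set, hn, Set.card_singleton, Nat.add_sub_cancel])
    rw [G.card_edgeFinset_eq_card_edgeFinset_induce_add_degree v, mul_add_one]
    refine ⟨by omega, fun h ↦ absurd ?_ hfree⟩
    obtain ⟨w, hvw⟩ := (G.degree_pos_iff_exists_adj v).1 (by omega)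
    obtain ⟨l, hl, hhead, hlen⟩ :=
      (heq (by omega)).exists_isPathList ⟨w, by simpa using hvw.ne'⟩
    refine ((hl.map (Embedding.induce {v}ᶜ)).cons (w := v) (by simp) ?_).contains_pathGraph
      (by simp; omega)
    simp only [List.head?_map, hhead, Option.map_some, Option.mem_def, Option.some_inj]
    rintro _ rfl
    exact hvw
  · push Not at hlow
    have := G.two_mul_card_edgeFinset_le_of_card_reachable_le (c := k - 1)
      fun v ↦ Nat.le_sub_one_of_lt (card_reachable_lt_of_not_contains_pathGraph hfree hlow v)
    rwa [Nat.sub_sub, hn] at this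

end SimpleGraph

theorem erdos_gallai_path_general {V : Type*} [Fintype V] (k : ℕ) (hk : 3 ≤ k)
    (G : SimpleGraph V) (hfree : ¬ Contains (SimpleGraph.pathGraph k) G) :
    2 * G.edgeFinset.card ≤ (k - 2) * Fintype.card V ∧
    (2 * G.edgeFinset.card = (k - 2) * Fintype.card V ↔
      ∃ (m : ℕ) (e : V ≃ Fin m × Fin (k - 1)),
        ∀ u v : V, G.Adj u v ↔ (e u).1 = (e v).1 ∧ e u ≠ e v) := by
  obtain ⟨hle, heq⟩ := G.two_mul_card_edgeFinset_le_of_not_contains_pathGraph hk hfree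
  refine ⟨hle, fun h ↦ (heq h).exists_equiv_fin_prod, ?_⟩
  rintro ⟨m, e, he⟩
  rw [two_mul_card_edgeFinset_eq_of_equiv_fin_prod e he, Nat.sub_sub]

theorem erdos_gallai_path {V : Type*} [Fintype V] [DecidableEq V] (k : ℕ) (hk : 3 ≤ k)
    (G : SimpleGraph V) (hfree : ¬ Contains (SimpleGraph.pathGraph k) G) :
    2 * G.edgeFinset.card ≤ (k - 2) * Fintype.card V ∧
    (2 * G.edgeFinset.card = (k - 2) * Fintype.card V ↔
      ∃ (m : ℕ) (e : V ≃ Fin m × Fin (k - 1)),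
        ∀ u v : V, G.Adj u v ↔ (e u).1 = (e v).1 ∧ e u ≠ e v) :=
  erdos_gallai_path_general k hk G hfree
end

section
/- For every graph G on n vertices, the signless Laplacian spectral radius q(G) satisfies q(G) ≤ max over vertices v of (d(v) + (1/d(v)) · Σ_{z ∈ N(v)} d(z)), where the maximum is over vertices v of positive degree (assuming G has at least one edge). -/
open SimpleGraph Finset

attribute [local instance] Classical.propDecidable

theorem merris_bound {V : Type*} [Fintype V] [DecidableEq V] (G : SimpleGraph V)
    (h : G.edgeFinset.Nonempty) :
    ∃ v : V, 0 < G.degree v ∧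
      qspec G ≤ (G.degree v : ℝ) +
        (1 / (G.degree v : ℝ)) * ∑ z ∈ G.neighborFinset v, (G.degree z : ℝ) := by
  classical
  set m : V → ℝ := fun v =>
    (G.degree v : ℝ) + (1 / (G.degree v : ℝ)) * ∑ z ∈ G.neighborFinset v, (G.degree z : ℝ)
    with hm
  have hSne : (univ.filter fun v => 0 < G.degree v).Nonempty := by
    obtain ⟨e, he⟩ := h
    induction e using Sym2.ind with
    | _ a b =>
      rw [mem_edgeFinset] at he
      exact ⟨a, by simp [((G.degree_pos_iff_exists_adj a).mpr ⟨b, he⟩)]⟩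
  obtain ⟨v, hvS, hvmax⟩ := Finset.exists_max_image _ m hSne
  have hvd : 0 < G.degree v := (Finset.mem_filter.mp hvS).2
  refine ⟨v, hvd, ?_⟩
  have hmnonneg : ∀ w : V, (0:ℝ) ≤ m w := by
    intro w
    have : (0:ℝ) ≤ ∑ z ∈ G.neighborFinset w, (G.degree z : ℝ) :=
      Finset.sum_nonneg fun z _ => by positivity
    have h1 : (0:ℝ) ≤ 1 / (G.degree w : ℝ) := by positivity
    have h2 : (0:ℝ) ≤ (G.degree w : ℝ) := by positivity
    simp only [hm]
    nlinarith
  refine Real.sSup_le ?_ (hmnonneg v)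
  rintro μ ⟨x, hx0, hx⟩
  have key : ∀ w : V, (G.degree w : ℝ) * x w + ∑ z ∈ G.neighborFinset w, x z = μ * x w := by
    intro w
    have := congrFun hx w
    simpa [signlessLaplacian, Matrix.add_mulVec, Matrix.mulVec_diagonal,
      SimpleGraph.adjMatrix_mulVec_apply] using this
  rcases le_or_gt μ 0 with hμ | hμ
  · exact hμ.trans (hmnonneg v)
  -- μ > 0 : there is a vertex of positive degree where x is nonzero
  have hz0 : ∃ z : V, 0 < G.degree z ∧ x z ≠ 0 := by
    by_contra hc
    push_neg at hc
    obtain ⟨w, hw⟩ := Function.ne_iff.mp hx0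
    simp only [Pi.zero_apply] at hw
    have hdw : G.degree w = 0 := by
      by_contra hdw
      exact hw (hc w (Nat.pos_of_ne_zero hdw))
    have hempty : G.neighborFinset w = ∅ := by
      have := G.card_neighborFinset_eq_degree w
      rw [hdw] at this
      exact Finset.card_eq_zero.mp this
    have := key w
    rw [hdw, hempty] at this
    simp at this
    rcases this with h1 | h1
    · exact absurd h1 (ne_of_gt hμ)
    · exact hw h1
  obtain ⟨z₀, hz₀d, hz₀x⟩ := hz0
  -- pick u maximizing |x z| / d z over positive-degree vertices
  obtain ⟨u, huS, humax⟩ := Finset.exists_max_image (univ.filter fun w => 0 < G.degree w)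
    (fun w => |x w| / (G.degree w : ℝ)) hSne
  have hud : 0 < G.degree u := (Finset.mem_filter.mp huS).2
  have hudR : (0:ℝ) < (G.degree u : ℝ) := by exact_mod_cast hud
  set c : ℝ := |x u| / (G.degree u : ℝ) with hc
  have hcpos : 0 < c := by
    have hz₀S : z₀ ∈ univ.filter fun w => 0 < G.degree w := by simp [hz₀d]
    have h1 := humax z₀ hz₀S
    have : (0:ℝ) < |x z₀| / (G.degree z₀ : ℝ) := by
      apply div_pos (abs_pos.mpr hz₀x)
      exact_mod_cast hz₀d
    linarith
  have hxu : 0 < |x u| := by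
    rcases lt_or_eq_of_le (abs_nonneg (x u)) with h1 | h1
    · exact h1
    · exfalso; rw [hc, ← h1] at hcpos; simp at hcpos
  -- neighbor bound
  have hnb : ∀ z ∈ G.neighborFinset u, |x z| ≤ c * (G.degree z : ℝ) := by
    intro z hz
    rw [SimpleGraph.mem_neighborFinset] at hz
    have hzd : 0 < G.degree z := (G.degree_pos_iff_exists_adj z).mpr ⟨u, hz.symm⟩
    have hzdR : (0:ℝ) < (G.degree z : ℝ) := by exact_mod_cast hzd
    have h1 := humax z (by simp [hzd])
    rw [div_le_iff₀ hzdR] at h1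
    exact h1
  have hsum : |∑ z ∈ G.neighborFinset u, x z| ≤ c * ∑ z ∈ G.neighborFinset u, (G.degree z : ℝ) := by
    refine (Finset.abs_sum_le_sum_abs _ _).trans ?_
    rw [Finset.mul_sum]
    exact Finset.sum_le_sum hnb
  -- main estimate at u
  have hmain : μ * |x u| ≤ m u * |x u| := by
    have h1 : μ * |x u| = |μ * x u| := by rw [abs_mul, abs_of_pos hμ]
    rw [h1, ← key u]
    calc |(G.degree u : ℝ) * x u + ∑ z ∈ G.neighborFinset u, x z|
        ≤ |(G.degree u : ℝ) * x u| + |∑ z ∈ G.neighborFinset u, x z| := abs_add_le _ _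
      _ ≤ (G.degree u : ℝ) * |x u| + c * ∑ z ∈ G.neighborFinset u, (G.degree z : ℝ) := by
          rw [abs_mul, abs_of_pos hudR]; linarith
      _ = m u * |x u| := by
          simp only [hm, hc]
          field_simp
  have hμu : μ ≤ m u := le_of_mul_le_mul_right hmain hxu
  exact hμu.trans (hvmax u huS)
end

section
/- For integers t ≥ 2 and n > 5t², the signless Laplacian spectral radius of the graph S_{n,t} (the join of K_t with an independent set of size n−t) satisfies q(S_{n,t}) > n + 2t − 2 − 2(t²−t)/(n+2t−3), and consequently q(S_{n,t}) > n + 2t − 3. -/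
open SimpleGraph Finset

attribute [local instance] Classical.propDecidable

lemma snt_adj {n t : ℕ} (i j : Fin n) :
    (Snt n t).Adj i j ↔ i ≠ j ∧ ((i : ℕ) < t ∨ (j : ℕ) < t) := by
  simp only [Snt, SimpleGraph.fromRel_adj]
  tauto

lemma card_filter_lt (n t : ℕ) (h : t ≤ n) :
    ({u : Fin n | (u : ℕ) < t} : Finset (Fin n)).card = t := by
  classical
  rw [show ({u : Fin n | (u : ℕ) < t} : Finset (Fin n)) = univ.filter (fun u : Fin n => (u : ℕ) < t) from rfl]
  rw [← Finset.card_range t]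
  apply Finset.card_bij (fun (a : Fin n) _ => (a : ℕ))
  · intro a ha; simp at ha ⊢; omega
  · intro a ha b hb hab; exact Fin.val_injective hab
  · intro b hb; simp at hb
    exact ⟨⟨b, lt_of_lt_of_le hb h⟩, by simp [hb]⟩

lemma sigQ_apply {V : Type*} [Fintype V] [DecidableEq V] (G : SimpleGraph V)
    (x : V → ℝ) (v : V) :
    (signlessLaplacian G).mulVec x v = (G.degree v : ℝ) * x v + ∑ u ∈ G.neighborFinset v, x u := by
  simp [signlessLaplacian, Matrix.add_mulVec, Matrix.mulVec_diagonal]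

lemma nbhd_small {n t : ℕ} (v : Fin n) (hv : (v : ℕ) < t) :
    (Snt n t).neighborFinset v = univ.erase v := by
  ext u
  simp only [mem_neighborFinset, snt_adj, Finset.mem_erase, Finset.mem_univ, and_true]
  constructor
  · rintro ⟨h, _⟩; exact h.symm
  · intro h; exact ⟨h.symm, Or.inl hv⟩

lemma nbhd_big {n t : ℕ} (v : Fin n) (hv : ¬ (v : ℕ) < t) :
    (Snt n t).neighborFinset v = univ.filter (fun u : Fin n => (u : ℕ) < t) := by
  ext u
  simp only [mem_neighborFinset, snt_adj, Finset.mem_filter, Finset.mem_univ, true_and]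
  constructor
  · rintro ⟨h, hor⟩; tauto
  · intro h; exact ⟨fun e => hv (e ▸ h), Or.inr h⟩

lemma deg_small {n t : ℕ} (v : Fin n) (hv : (v : ℕ) < t) :
    (Snt n t).degree v = n - 1 := by
  rw [← card_neighborFinset_eq_degree, nbhd_small v hv,
    Finset.card_erase_of_mem (Finset.mem_univ v), Finset.card_univ, Fintype.card_fin]

lemma deg_big {n t : ℕ} (v : Fin n) (h : t ≤ n) (hv : ¬ (v : ℕ) < t) :
    (Snt n t).degree v = t := by
  rw [← card_neighborFinset_eq_degree, nbhd_big v hv, card_filter_lt n t h]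

lemma qspec_bddAbove {V : Type*} [Fintype V] [DecidableEq V] (G : SimpleGraph V) :
    BddAbove {μ : ℝ | ∃ x : V → ℝ, x ≠ 0 ∧ (signlessLaplacian G).mulVec x = μ • x} := by
  refine ⟨2 * Fintype.card V, ?_⟩
  rintro μ ⟨x, hx0, heig⟩
  have hne : Nonempty V := by
    by_contra h
    exact hx0 (funext fun v => absurd ⟨v⟩ h)
  obtain ⟨v, -, hv⟩ := Finset.exists_max_image Finset.univ (fun u => |x u|) Finset.univ_nonempty
  have hv' : ∀ u, |x u| ≤ |x v| := fun u => hv u (Finset.mem_univ u)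
  have hxv : 0 < |x v| := by
    rcases Function.ne_iff.mp hx0 with ⟨u, hu⟩
    exact lt_of_lt_of_le (abs_pos.mpr hu) (hv' u)
  have hQ : (signlessLaplacian G).mulVec x v = μ * x v := by
    rw [heig]; rfl
  rw [sigQ_apply] at hQ
  have h1 : |μ * x v| ≤ (G.degree v : ℝ) * |x v| + (G.degree v : ℝ) * |x v| := by
    rw [← hQ]
    refine le_trans (abs_add_le _ _) (add_le_add ?_ ?_)
    · rw [abs_mul, abs_of_nonneg (by positivity : (0:ℝ) ≤ (G.degree v : ℝ))]
    · refine le_trans (Finset.abs_sum_le_sum_abs _ _) ?_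
      have := Finset.sum_le_card_nsmul (G.neighborFinset v) (fun u => |x u|) |x v|
        (fun u _ => hv' u)
      rw [card_neighborFinset_eq_degree] at this
      simpa [nsmul_eq_mul, mul_comm] using this
  have hdeg : (G.degree v : ℝ) ≤ Fintype.card V := by
    exact_mod_cast (G.degree_le_maxDegree v).trans (G.maxDegree_le_of_forall_degree_le _
      (fun w => Nat.le_of_lt_succ (Nat.lt_succ_of_lt (G.degree_lt_card_verts w)))) |>.trans
      (le_refl _)
  calc μ ≤ |μ| := le_abs_self μ
    _ ≤ 2 * Fintype.card V := by
        have := h1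
        rw [abs_mul] at this
        have h2 : |μ| * |x v| ≤ 2 * (Fintype.card V) * |x v| := by nlinarith
        exact le_of_mul_le_mul_right (by nlinarith) hxv

lemma le_qspec {V : Type*} [Fintype V] [DecidableEq V] (G : SimpleGraph V) (μ : ℝ)
    (x : V → ℝ) (hx : x ≠ 0) (h : (signlessLaplacian G).mulVec x = μ • x) :
    μ ≤ qspec G :=
  le_csSup (qspec_bddAbove G) ⟨x, hx, h⟩

theorem qspec_Snt_lower (n t : ℕ) (ht : 2 ≤ t) (hn : 5 * t ^ 2 < n) :
    (n : ℝ) + 2 * t - 2 - 2 * ((t : ℝ) ^ 2 - t) / ((n : ℝ) + 2 * t - 3) < qspec (Snt n t) ∧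
    (n : ℝ) + 2 * t - 3 < qspec (Snt n t) := by
  have ht2 : (2:ℝ) ≤ (t:ℝ) := by exact_mod_cast ht
  have hn5 : 5 * (t:ℝ)^2 < (n:ℝ) := by exact_mod_cast hn
  have htn : t ≤ n := by nlinarith
  have htn' : t < n := by nlinarith
  have hn1 : 1 ≤ n := by omega
  obtain ⟨s, hs⟩ : ∃ s : ℝ, s = (n:ℝ) + 2*(t:ℝ) - 2 := ⟨_, rfl⟩
  obtain ⟨c, hcdef⟩ : ∃ c : ℝ, c = 2*(t:ℝ)^2 - 2*(t:ℝ) := ⟨_, rfl⟩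
  have hc4 : (4:ℝ) ≤ c := by rw [hcdef]; nlinarith
  have hcd : c < s - 1 := by rw [hcdef, hs]; nlinarith
  have hd : (0:ℝ) < s - 1 := by nlinarith
  have hD0 : (0:ℝ) ≤ s^2 - 4*c := by nlinarith
  obtain ⟨r, hr⟩ : ∃ r : ℝ, r = Real.sqrt (s^2 - 4*c) := ⟨_, rfl⟩
  have hr0 : 0 ≤ r := hr ▸ Real.sqrt_nonneg _
  have hrsq : r^2 = s^2 - 4*c := by rw [hr]; exact Real.sq_sqrt hD0
  obtain ⟨μ, hmu⟩ : ∃ μ : ℝ, μ = (s + r)/2 := ⟨_, rfl⟩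
  have hμsq : μ^2 = s*μ - c := by rw [hmu]; linear_combination (1/4) * hrsq
  obtain ⟨x, hxdef⟩ : ∃ x : Fin n → ℝ, x = fun i : Fin n => if (i:ℕ) < t then μ - (t:ℝ) else (t:ℝ) :=
    ⟨_, rfl⟩
  have hxne : x ≠ 0 := by
    intro h
    have h0 : x ⟨t, htn'⟩ = 0 := by rw [h]; rfl
    rw [hxdef] at h0
    simp only [if_neg (lt_irrefl t)] at h0
    nlinarith [h0]
  have hcardlt := card_filter_lt n t htn
  have hsum : ∑ u : Fin n, x u = (t:ℝ)*(μ - t) + ((n:ℝ) - t)*(t:ℝ) := by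
    rw [hxdef]
    rw [Finset.sum_ite, Finset.sum_const, Finset.sum_const]
    have h2 : (Finset.univ.filter (fun u : Fin n => ¬ (u:ℕ) < t)).card = n - t := by
      have := Finset.card_filter_add_card_filter_not
        (s := (Finset.univ : Finset (Fin n))) (p := fun u : Fin n => (u:ℕ) < t)
      rw [hcardlt] at this
      simp only [Finset.card_univ, Fintype.card_fin] at this
      omega
    rw [hcardlt, h2, nsmul_eq_mul, nsmul_eq_mul, Nat.cast_sub htn]
  have hsumlt : ∑ u ∈ Finset.univ.filter (fun u : Fin n => (u:ℕ) < t), x u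
      = (t:ℝ)*(μ - t) := by
    rw [Finset.sum_congr rfl (fun u hu => ?_), Finset.sum_const, hcardlt, nsmul_eq_mul]
    · rw [hxdef]
      exact if_pos (Finset.mem_filter.mp hu).2
  have heig : (signlessLaplacian (Snt n t)).mulVec x = μ • x := by
    funext v
    rw [sigQ_apply, Pi.smul_apply, smul_eq_mul]
    by_cases hvt : (v:ℕ) < t
    · rw [deg_small v hvt, nbhd_small v hvt,
        Finset.sum_erase_eq_sub (Finset.mem_univ v), hsum]
      have hxv : x v = μ - t := by rw [hxdef]; exact if_pos hvt
      rw [hxv, Nat.cast_sub hn1]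
      push_cast
      rw [hs, hcdef] at hμsq
      linear_combination -hμsq
    · rw [deg_big v htn hvt, nbhd_big v hvt, hsumlt]
      have hxv : x v = (t:ℝ) := by rw [hxdef]; exact if_neg hvt
      rw [hxv]
      ring
  have hle : μ ≤ qspec (Snt n t) := le_qspec _ μ x hxne heig
  obtain ⟨q, hq⟩ : ∃ q : ℝ, q = c / (s - 1) := ⟨_, rfl⟩
  have hqc : q * (s - 1) = c := by rw [hq]; exact div_mul_cancel₀ c (ne_of_gt hd)
  have hq0 : 0 < q := hq ▸ div_pos (by nlinarith) hd
  have hq1 : q < 1 := hq ▸ (div_lt_one hd).mpr hcd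
  have hkey : (s - 2*q)^2 < s^2 - 4*c := by nlinarith [hqc, mul_pos hq0 (sub_pos.mpr hq1)]
  have hpos : (0:ℝ) ≤ s - 2*q := by linarith
  have hrgt : s - 2*q < r := by rw [hr]; exact (Real.lt_sqrt hpos).mpr hkey
  have hμgt : s - q < μ := by rw [hmu]; linarith
  have hb1 : (n : ℝ) + 2 * t - 2 - 2 * ((t : ℝ) ^ 2 - t) / ((n : ℝ) + 2 * t - 3) = s - q := by
    rw [hq, hcdef, hs]
    have h3 : (n:ℝ) + 2*t - 2 - 1 = (n:ℝ) + 2*t - 3 := by ring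
    rw [h3]
    ring_nf
  constructor
  · rw [hb1]; linarith
  · have hb2 : (n : ℝ) + 2 * t - 3 = s - 1 := by rw [hs]; ring
    rw [hb2]; linarith
end

section
/- Let n = r(t−1) + 2 with r ≥ 1 and t ≥ 3, and let G = K_1 ∇ L_{r,t−1} be the join of a single vertex with the graph consisting of r copies of K_t intersecting in exactly one common vertex. Then the signless Laplacian spectral radius satisfies q(G) < n + 2t − 3. -/
/-!
Test the signless Laplacian against the degree vector `d`: `(Q d)_v = d_v² + ∑_{u ~ v} d_u`.
For a nonnegative matrix, a positive vector `w` with `M w ≤ c w` bounds every eigenvalue by `c`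
(look at a coordinate maximising `|x_v| / w_v`), so `q(G) < B` as soon as
`d_v² + ∑_{u ~ v} d_u < B d_v` for every `v`. In `K₁ ∇ L_{r,s}` with `s = t - 1` the apex and the
centre have degree `rs + 1` and the other vertices degree `s + 1`; for `B = rs + 2s + 1 = n + 2t - 3`
the two inequalities reduce to `rs(s - 2) + 2s - 1 > 0` and `rs(s - 1) + s - 1 > 0`.
-/

open SimpleGraph Finset

attribute [local instance] Classical.propDecidable

/-- The join `K₁ ∇ L_{r,s}`: an apex vertex `none`, the center `some none`, and
`r` cliques of size `s` (so each clique of `L_{r,s}` has `s + 1` vertices with the center). -/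
def K1joinL (r s : ℕ) : SimpleGraph (Option (Option (Fin r × Fin s))) where
  Adj x y := x ≠ y ∧ (x = none ∨ y = none ∨ x = some none ∨ y = some none ∨
    ∃ p q, x = some (some p) ∧ y = some (some q) ∧ p.1 = q.1)
  symm := ⟨by
    rintro x y ⟨hne, h⟩
    refine ⟨hne.symm, ?_⟩
    rcases h with h | h | h | h | ⟨p, q, hp, hq, h⟩
    · exact Or.inr (Or.inl h)
    · exact Or.inl h
    · exact Or.inr (Or.inr (Or.inr (Or.inl h)))
    · exact Or.inr (Or.inr (Or.inl h))
    · exact Or.inr (Or.inr (Or.inr (Or.inr ⟨q, p, hq, hp, h.symm⟩)))⟩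
  loopless := ⟨fun x h => h.1 rfl⟩

open Matrix

section

variable {V : Type*} [Fintype V]

theorem abs_le_of_mulVec_le_smul {M : Matrix V V ℝ} (hM : ∀ i j, 0 ≤ M i j) {w : V → ℝ}
    (hw : ∀ v, 0 < w v) {c : ℝ} (hc : M *ᵥ w ≤ c • w) {μ : ℝ} {x : V → ℝ} (hx : x ≠ 0)
    (hμ : M *ᵥ x = μ • x) : |μ| ≤ c := by
  obtain ⟨u₀, hu₀⟩ := Function.ne_iff.mp hx
  obtain ⟨v, -, hv⟩ := univ.exists_max_image (fun u => |x u| / w u) ⟨u₀, mem_univ _⟩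
  set m := |x v| / w v
  have hxm : ∀ u, |x u| ≤ m * w u := fun u => (div_le_iff₀ (hw u)).mp (hv u (mem_univ u))
  have hxv : |x v| = m * w v := (div_mul_cancel₀ _ (hw v).ne').symm
  have hm : 0 < m := pos_of_mul_pos_left ((abs_pos.mpr hu₀).trans_le (hxm u₀)) (hw u₀).le
  have key : |μ| * (m * w v) ≤ c * (m * w v) := calc
    |μ| * (m * w v) = |∑ u, M v u * x u| := by
      rw [← hxv, ← abs_mul, ← smul_eq_mul, ← Pi.smul_apply, ← hμ]; rfl
    _ ≤ ∑ u, M v u * |x u| := by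
      refine (abs_sum_le_sum_abs _ _).trans_eq (sum_congr rfl fun u _ => ?_)
      rw [abs_mul, abs_of_nonneg (hM v u)]
    _ ≤ ∑ u, M v u * (m * w u) := by gcongr with u; exact hM v u; exact hxm u
    _ = m * (M *ᵥ w) v := by
      simp only [mulVec, dotProduct, mul_sum]
      exact sum_congr rfl fun u _ => by ring
    _ ≤ m * (c * w v) := by gcongr; exact hc v
    _ = c * (m * w v) := by ring
  exact le_of_mul_le_mul_right key (mul_pos hm (hw v))

variable [DecidableEq V]

theorem signlessLaplacian_mulVec_apply (G : SimpleGraph V) (w : V → ℝ) (v : V) :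
    (signlessLaplacian G *ᵥ w) v = G.degree v * w v + ∑ u ∈ G.neighborFinset v, w u := by
  rw [signlessLaplacian, add_mulVec, Pi.add_apply, mulVec_diagonal, adjMatrix_mulVec_apply]

theorem qspec_lt_of_mulVec_lt [Nonempty V] (G : SimpleGraph V) {w : V → ℝ} (hw : ∀ v, 0 < w v)
    {B : ℝ} (hB : ∀ v, (signlessLaplacian G *ᵥ w) v < B * w v) : qspec G < B := by
  set Q := signlessLaplacian G
  have hQ : ∀ i j, 0 ≤ Q i j := fun i j => by
    simp only [Q, signlessLaplacian, Matrix.add_apply, diagonal_apply, adjMatrix_apply]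
    positivity
  set c := univ.sup' univ_nonempty fun v => (Q *ᵥ w) v / w v
  have hc : Q *ᵥ w ≤ c • w := fun v =>
    (div_le_iff₀ (hw v)).mp (le_sup' (fun v => (Q *ᵥ w) v / w v) (mem_univ v))
  have hcB : c < B := (sup'_lt_iff _).mpr fun v _ => (div_lt_iff₀ (hw v)).mpr (hB v)
  have hc₀ : 0 ≤ c := by
    obtain ⟨v⟩ := ‹Nonempty V›
    have : 0 ≤ (Q *ᵥ w) v := sum_nonneg fun u _ => mul_nonneg (hQ v u) (hw u).le
    exact nonneg_of_mul_nonneg_left (this.trans (hc v)) (hw v)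
  refine lt_of_le_of_lt (Real.sSup_le ?_ hc₀) hcB
  rintro μ ⟨x, hx, hμ⟩
  exact (le_abs_self μ).trans (abs_le_of_mulVec_le_smul hQ hw hc hx hμ)

theorem qspec_lt_of_degree_sq_add_sum_degree_lt [Nonempty V] (G : SimpleGraph V) {B : ℝ}
    (hB : ∀ v, (G.degree v : ℝ) ^ 2 + ∑ u ∈ G.neighborFinset v, (G.degree u : ℝ)
      < B * G.degree v) : qspec G < B := by
  have hdeg : ∀ v, 0 < (G.degree v : ℝ) := fun v => by
    by_contra! h
    have h₀ : (G.degree v : ℝ) = 0 := h.antisymm (Nat.cast_nonneg _)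
    have hv : G.neighborFinset v = ∅ := by
      rw [← card_eq_zero, card_neighborFinset_eq_degree]; exact_mod_cast h₀
    simpa [hv, h₀] using hB v
  refine qspec_lt_of_mulVec_lt G hdeg fun v => ?_
  rw [signlessLaplacian_mulVec_apply, ← sq]
  exact hB v

end

section K1joinL

variable {r s : ℕ}

theorem K1joinL_sum_neighborFinset_none {M : Type*} [AddCommMonoid M]
    (f : Option (Option (Fin r × Fin s)) → M) :
    ∑ u ∈ (K1joinL r s).neighborFinset none, f u = f (some none) + ∑ p, f (some (some p)) := by
  rw [neighborFinset_eq_filter, sum_filter, Fintype.sum_option, Fintype.sum_option]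
  simp [K1joinL]

theorem K1joinL_sum_neighborFinset_some_none {M : Type*} [AddCommMonoid M]
    (f : Option (Option (Fin r × Fin s)) → M) :
    ∑ u ∈ (K1joinL r s).neighborFinset (some none), f u = f none + ∑ p, f (some (some p)) := by
  rw [neighborFinset_eq_filter, sum_filter, Fintype.sum_option, Fintype.sum_option]
  simp [K1joinL]

theorem K1joinL_sum_neighborFinset_some_some {M : Type*} [AddCommMonoid M]
    (f : Option (Option (Fin r × Fin s)) → M) (p : Fin r × Fin s) :
    ∑ u ∈ (K1joinL r s).neighborFinset (some (some p)), f u =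
      f none + f (some none) + ∑ b ∈ univ.erase p.2, f (some (some (p.1, b))) := by
  rw [neighborFinset_eq_filter, sum_filter, Fintype.sum_option, Fintype.sum_option, add_assoc,
    ← sum_filter, ← sum_image (f := fun q => f (some (some q))) (g := (p.1, ·))
      fun _ _ _ _ h => (Prod.ext_iff.mp h).2]
  congr 2
  · simp [K1joinL]
  · simp [K1joinL]
  · congr 1
    ext ⟨a, b⟩
    simp only [K1joinL, mem_image, mem_erase]
    aesop

theorem K1joinL_degree_none : ((K1joinL r s).degree none : ℝ) = r * s + 1 := by
  rw [← card_neighborFinset_eq_degree, cast_card, K1joinL_sum_neighborFinset_none]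
  simp [add_comm]

theorem K1joinL_degree_some_none : ((K1joinL r s).degree (some none) : ℝ) = r * s + 1 := by
  rw [← card_neighborFinset_eq_degree, cast_card, K1joinL_sum_neighborFinset_some_none]
  simp [add_comm]

theorem K1joinL_degree_some_some (p : Fin r × Fin s) :
    ((K1joinL r s).degree (some (some p)) : ℝ) = s + 1 := by
  rw [← card_neighborFinset_eq_degree, cast_card, K1joinL_sum_neighborFinset_some_some,
    sum_erase_eq_sub (mem_univ _)]
  simp only [sum_const, card_univ, Fintype.card_fin, nsmul_eq_mul, mul_one, add_add_sub_cancel]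
  ring

end K1joinL

theorem qspec_K1_join_L_general (r t n : ℕ) (ht : 3 ≤ t) (hn : n = r * (t - 1) + 2) :
    qspec (K1joinL r (t - 1)) < (n : ℝ) + 2 * t - 3 := by
  obtain ⟨s, rfl⟩ : ∃ s, t = s + 1 := ⟨t - 1, by omega⟩
  have hs : (2 : ℝ) ≤ s := by exact_mod_cast (by omega : 2 ≤ s)
  subst hn
  rw [Nat.add_sub_cancel]
  apply qspec_lt_of_degree_sq_add_sum_degree_lt
  have hrs : (0 : ℝ) ≤ r * s := by positivity
  rintro (_ | _ | p) <;>
    simp only [K1joinL_sum_neighborFinset_none, K1joinL_sum_neighborFinset_some_none,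
      K1joinL_sum_neighborFinset_some_some, K1joinL_degree_none, K1joinL_degree_some_none,
      K1joinL_degree_some_some, sum_erase_eq_sub (mem_univ _), sum_const, card_univ,
      Fintype.card_prod, Fintype.card_fin, nsmul_eq_mul] <;>
    push_cast <;> nlinarith

theorem qspec_K1_join_L (r t n : ℕ) (hr : 1 ≤ r) (ht : 3 ≤ t) (hn : n = r * (t - 1) + 2) :
    qspec (K1joinL r (t - 1)) < (n : ℝ) + 2 * t - 3 :=
  qspec_K1_join_L_general r t n ht hn
end

section
/- Let G be a graph whose nonincreasing degree sequence is (n−1, n−1, t, t, …, t) on n vertices with t ≥ 3 and n ≥ t + 2. Then q(G) ≤ (n + 2t − 2 + √((n−2t−2)² + 16(n−2t−2) + 16t + 16))/2. -/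
open SimpleGraph Finset

attribute [local instance] Classical.propDecidable

set_option maxHeartbeats 1000000 in
theorem duan_bound {V : Type*} [Fintype V] [DecidableEq V] (G : SimpleGraph V) (n t : ℕ)
    (hn : Fintype.card V = n) (ht : 3 ≤ t) (hnt : t + 2 ≤ n)
    (u v : V) (huv : u ≠ v) (hu : G.degree u = n - 1) (hv : G.degree v = n - 1)
    (hw : ∀ w : V, w ≠ u → w ≠ v → G.degree w = t) :
    qspec G ≤ ((n : ℝ) + 2 * t - 2 +
      Real.sqrt (((n : ℝ) - 2 * t - 2) ^ 2 + 16 * ((n : ℝ) - 2 * t - 2) + 16 * t + 16)) / 2 := by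
  have hn5 : 5 ≤ n := by omega
  have hnR : (5:ℝ) ≤ (n:ℝ) := by exact_mod_cast hn5
  have htR : (3:ℝ) ≤ (t:ℝ) := by exact_mod_cast ht
  have hntR : (t:ℝ) + 2 ≤ (n:ℝ) := by exact_mod_cast hnt
  set D : ℝ := ((n : ℝ) - 2 * t - 2) ^ 2 + 16 * ((n : ℝ) - 2 * t - 2) + 16 * t + 16 with hD
  have hD0 : 0 ≤ D := by nlinarith [sq_nonneg ((n:ℝ) - 2*t + 6)]
  have hsq : Real.sqrt D ^ 2 = D := Real.sq_sqrt hD0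
  have hs0 : 0 ≤ Real.sqrt D := Real.sqrt_nonneg D
  have habs : |(n:ℝ) - 2*t + 2| ≤ Real.sqrt D := by
    rw [← Real.sqrt_sq_eq_abs]
    apply Real.sqrt_le_sqrt
    nlinarith
  obtain ⟨hge2', hge1⟩ := abs_le.1 habs
  have hge2 : -((n:ℝ) - 2*t + 2) ≤ Real.sqrt D := by linarith
  set B : ℝ := ((n : ℝ) + 2 * t - 2 + Real.sqrt D) / 2 with hB
  have hBn : (n:ℝ) ≤ B := by rw [hB]; linarith
  have hBt : 2*(t:ℝ) - 2 ≤ B := by rw [hB]; linarith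
  have hB0 : 0 ≤ B := by linarith
  apply Real.sSup_le _ hB0
  rintro μ ⟨x, hx0, hxe⟩
  set y : V → ℝ := fun i => |x i| with hy
  set a : ℝ := |μ| with ha
  have hy0 : ∀ i, 0 ≤ y i := fun i => abs_nonneg _
  -- pointwise eigen-inequality for absolute values
  have key : ∀ i, a * y i ≤ (G.degree i : ℝ) * y i + ∑ j ∈ G.neighborFinset i, y j := by
    intro i
    have h1 : (signlessLaplacian G).mulVec x i
        = (G.degree i : ℝ) * x i + ∑ j ∈ G.neighborFinset i, x j := by
      simp [signlessLaplacian, Matrix.add_mulVec, Matrix.mulVec_diagonal,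
        SimpleGraph.adjMatrix_mulVec_apply]
    have h2 : μ * x i = (G.degree i : ℝ) * x i + ∑ j ∈ G.neighborFinset i, x j := by
      rw [← h1, hxe]; simp
    calc a * y i = |μ * x i| := by rw [ha, hy, abs_mul]
      _ = |(G.degree i : ℝ) * x i + ∑ j ∈ G.neighborFinset i, x j| := by rw [h2]
      _ ≤ |(G.degree i : ℝ) * x i| + |∑ j ∈ G.neighborFinset i, x j| := abs_add_le _ _
      _ ≤ (G.degree i : ℝ) * y i + ∑ j ∈ G.neighborFinset i, y j := by
          apply add_le_add
          · rw [abs_mul, abs_of_nonneg (by positivity : (0:ℝ) ≤ (G.degree i : ℝ))]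
          · exact Finset.abs_sum_le_sum_abs _ _
  -- dominating vertices are adjacent to everything
  have hadj : ∀ p : V, G.degree p = n - 1 → ∀ w : V, w ≠ p → G.Adj p w := by
    intro p hp w hwp
    have hsub : G.neighborFinset p ⊆ univ.erase p := by
      intro z hz
      rw [mem_neighborFinset] at hz
      exact mem_erase.2 ⟨hz.ne', mem_univ z⟩
    have hcard : (univ.erase p).card ≤ (G.neighborFinset p).card := by
      rw [card_neighborFinset_eq_degree, hp, card_erase_of_mem (mem_univ p), card_univ, hn]
    have heq := Finset.eq_of_subset_of_card_le hsub hcard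
    rw [← mem_neighborFinset, heq]
    exact mem_erase.2 ⟨hwp, mem_univ w⟩
  set S : Finset V := (univ.erase u).erase v with hS
  have hvS : v ∈ univ.erase u := mem_erase.2 ⟨huv.symm, mem_univ v⟩
  have hScard : S.card = n - 2 := by
    rw [hS, card_erase_of_mem hvS, card_erase_of_mem (mem_univ u), card_univ, hn]
    omega
  have hSne : S.Nonempty := card_pos.1 (by omega)
  have hmemS : ∀ j : V, j ≠ u → j ≠ v → j ∈ S := fun j h1 h2 =>
    mem_erase.2 ⟨h2, mem_erase.2 ⟨h1, mem_univ j⟩⟩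
  set m : ℝ := S.sup' hSne y with hm
  obtain ⟨w₀, hw₀S, hw₀⟩ := Finset.exists_mem_eq_sup' hSne y
  have hm0 : 0 ≤ m := by rw [hm, hw₀]; exact hy0 w₀
  have hym : ∀ j ∈ S, y j ≤ m := fun j hj => Finset.le_sup' y hj
  set c : ℝ := max (y u) (y v) with hc
  have hyu : y u ≤ c := le_max_left _ _
  have hyv : y v ≤ c := le_max_right _ _
  have hc0 : 0 ≤ c := le_trans (hy0 u) hyu
  -- Inequality (1): a * m ≤ (2t-2) m + 2c
  have hw₀v : w₀ ≠ v := (mem_erase.1 hw₀S).1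
  have hw₀u : w₀ ≠ u := (mem_erase.1 (mem_erase.1 hw₀S).2).1
  have hdw₀ : G.degree w₀ = t := hw w₀ hw₀u hw₀v
  have huN : u ∈ G.neighborFinset w₀ := (mem_neighborFinset _ _ _).2 (hadj u hu w₀ hw₀u).symm
  have hvN : v ∈ (G.neighborFinset w₀).erase u :=
    mem_erase.2 ⟨huv.symm, (mem_neighborFinset _ _ _).2 (hadj v hv w₀ hw₀v).symm⟩
  have hsplit1 : ∑ j ∈ G.neighborFinset w₀, y j
      = y u + (y v + ∑ j ∈ ((G.neighborFinset w₀).erase u).erase v, y j) := by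
    rw [Finset.add_sum_erase _ y hvN, Finset.add_sum_erase _ y huN]
  have hcard2 : (((G.neighborFinset w₀).erase u).erase v).card = t - 2 := by
    rw [card_erase_of_mem hvN, card_erase_of_mem huN, card_neighborFinset_eq_degree, hdw₀]
    omega
  have hsum2 : ∑ j ∈ ((G.neighborFinset w₀).erase u).erase v, y j ≤ ((t:ℝ) - 2) * m := by
    have hb : ∀ j ∈ ((G.neighborFinset w₀).erase u).erase v, y j ≤ m := by
      intro j hj
      have hjv : j ≠ v := (mem_erase.1 hj).1
      have hju : j ≠ u := (mem_erase.1 (mem_erase.1 hj).2).1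
      exact hym j (hmemS j hju hjv)
    have h := Finset.sum_le_card_nsmul _ y m hb
    rw [hcard2, nsmul_eq_mul, Nat.cast_sub (by omega : 2 ≤ t)] at h
    push_cast at h ⊢
    linarith
  have hineq1 : a * m ≤ (2*(t:ℝ) - 2) * m + 2 * c := by
    have hk := key w₀
    rw [hsplit1, hdw₀] at hk
    have hmw : m = y w₀ := hw₀
    rw [← hmw] at hk
    nlinarith [hk, hsum2, hyu, hyv]
  -- Inequality (2): a * c ≤ n c + (n-2) m
  have key2 : ∀ p q : V, G.degree p = n - 1 → q ≠ p →
      (∀ j : V, j ≠ p → j ≠ q → j ∈ S) →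
      a * y p ≤ ((n:ℝ) - 1) * y p + y q + ((n:ℝ) - 2) * m := by
    intro p q hdp hqp hjS
    have hk := key p
    have hqN : q ∈ G.neighborFinset p := (mem_neighborFinset _ _ _).2 (hadj p hdp q hqp)
    have hsplit : ∑ j ∈ G.neighborFinset p, y j
        = y q + ∑ j ∈ (G.neighborFinset p).erase q, y j :=
      (Finset.add_sum_erase _ y hqN).symm
    have hcard3 : ((G.neighborFinset p).erase q).card = n - 2 := by
      rw [card_erase_of_mem hqN, card_neighborFinset_eq_degree, hdp]
      omega
    have hsum3 : ∑ j ∈ (G.neighborFinset p).erase q, y j ≤ ((n:ℝ) - 2) * m := by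
      have hb : ∀ j ∈ (G.neighborFinset p).erase q, y j ≤ m := by
        intro j hj
        have hjq : j ≠ q := (mem_erase.1 hj).1
        have hjp : j ≠ p := ((mem_neighborFinset _ _ _).1 (mem_erase.1 hj).2).ne'
        exact hym j (hjS j hjp hjq)
      have h := Finset.sum_le_card_nsmul _ y m hb
      rw [hcard3, nsmul_eq_mul, Nat.cast_sub (by omega : 2 ≤ n)] at h
      push_cast at h ⊢
      linarith
    have hdpc : (G.degree p : ℝ) = (n:ℝ) - 1 := by
      rw [hdp, Nat.cast_sub (by omega : 1 ≤ n)]; norm_num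
    rw [hsplit, hdpc] at hk
    linarith
  have hineq2 : a * c ≤ (n:ℝ) * c + ((n:ℝ) - 2) * m := by
    rcases le_total (y u) (y v) with h | h
    · have hcv : c = y v := max_eq_right h
      have h2 := key2 v u hv huv (fun j h1 h2 => hmemS j h2 h1)
      rw [hcv]
      linarith
    · have hcu : c = y u := max_eq_left h
      have h2 := key2 u v hu huv.symm (fun j h1 h2 => hmemS j h1 h2)
      rw [hcu]
      linarith
  -- positivity
  have hcm : 0 < c ∨ 0 < m := by
    obtain ⟨i, hi⟩ := Function.ne_iff.1 hx0
    have hyi : 0 < y i := abs_pos.2 hi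
    by_cases hiu : i = u
    · left; subst hiu; exact lt_of_lt_of_le hyi hyu
    · by_cases hiv : i = v
      · left; subst hiv; exact lt_of_lt_of_le hyi hyv
      · right; exact lt_of_lt_of_le hyi (hym i (hmemS i hiu hiv))
  -- conclude
  refine le_trans (le_abs_self μ) ?_
  by_contra hcon
  push_neg at hcon
  have han : (n:ℝ) < a := lt_of_le_of_lt hBn hcon
  have hat : 2*(t:ℝ) - 2 < a := lt_of_le_of_lt hBt hcon
  rcases lt_or_eq_of_le hm0 with hmpos | hmzero
  · -- m > 0
    have hmain : ((a - (2*t - 2)) * (a - n)) * m ≤ (2 * ((n:ℝ) - 2)) * m := by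
      have e1 : (a - (2*t-2)) * m = a * m - (2*(t:ℝ) - 2) * m := by ring
      have h1 : (a - (2*t-2)) * m ≤ 2 * c := by linarith [hineq1, e1]
      have e2 : (a - n) * c = a * c - (n:ℝ) * c := by ring
      have h2 : (a - n) * c ≤ ((n:ℝ)-2) * m := by linarith [hineq2, e2]
      calc ((a - (2*t-2)) * (a-n)) * m = (a-n) * ((a-(2*t-2))*m) := by ring
        _ ≤ (a-n) * (2*c) := by
            apply mul_le_mul_of_nonneg_left h1 (le_of_lt (sub_pos.2 han))
        _ = 2 * ((a-n)*c) := by ring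
        _ ≤ 2 * (((n:ℝ)-2)*m) := by linarith
        _ = (2 * ((n:ℝ)-2)) * m := by ring
    have hq : (a - (2*t - 2)) * (a - n) ≤ 2 * ((n:ℝ) - 2) :=
      le_of_mul_le_mul_right hmain hmpos
    have hcon' : ((n : ℝ) + 2 * t - 2 + Real.sqrt D) / 2 < a := by rw [← hB]; exact hcon
    have h1' : (Real.sqrt D + ((n:ℝ) - 2*t + 2))/2 < a - (2*t - 2) := by linarith
    have h2' : (Real.sqrt D - ((n:ℝ) - 2*t + 2))/2 < a - (n:ℝ) := by linarith
    have hnn1 : (0:ℝ) ≤ (Real.sqrt D + ((n:ℝ) - 2*t + 2))/2 := by linarith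
    have hnn2 : (0:ℝ) ≤ (Real.sqrt D - ((n:ℝ) - 2*t + 2))/2 := by linarith
    have hprod := mul_lt_mul'' h1' h2' hnn1 hnn2
    have hval : ((Real.sqrt D + ((n:ℝ) - 2*t + 2))/2) * ((Real.sqrt D - ((n:ℝ) - 2*t + 2))/2)
        = 2*(n:ℝ) - 4 := by
      linear_combination hsq/4 + hD/4
    linarith [hprod, hq, hval]
  · -- m = 0
    have hcpos : 0 < c := by
      rcases hcm with h | h
      · exact h
      · exact absurd h (by rw [← hmzero]; simp)
    have hm' : m = 0 := hmzero.symm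
    rw [hm'] at hineq2
    have e3 : (a - n) * c = a * c - (n:ℝ) * c := by ring
    have := mul_pos (sub_pos.2 han) hcpos
    nlinarith [hineq2, this, e3]
end

section
/- Let G be a graph on n vertices with a vertex u of degree n−1, and let x be a unit nonnegative eigenvector of the signless Laplacian Q(G) for the eigenvalue q = q(G) with q > n − 1. Then x_u² ≤ (n−1)/((q − n + 1)² + n − 1). -/
open SimpleGraph Finset

attribute [local instance] Classical.propDecidable

theorem eigenvector_component_bound {V : Type*} [Fintype V] [DecidableEq V]
    (G : SimpleGraph V) (u : V) (hu : G.degree u = Fintype.card V - 1)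
    (x : V → ℝ) (hpos : ∀ v, 0 ≤ x v) (hunit : ∑ v, x v ^ 2 = 1)
    (heig : (signlessLaplacian G).mulVec x = qspec G • x)
    (hq : (Fintype.card V : ℝ) - 1 < qspec G) :
    x u ^ 2 ≤ ((Fintype.card V : ℝ) - 1) /
      ((qspec G - (Fintype.card V : ℝ) + 1) ^ 2 + ((Fintype.card V : ℝ) - 1)) := by
  classical
  set n := Fintype.card V with hn
  have hn1 : 1 ≤ n := Fintype.card_pos_iff.mpr ⟨u⟩
  have hcast : ((n - 1 : ℕ) : ℝ) = (n : ℝ) - 1 := by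
    have := Nat.cast_sub hn1 (R := ℝ); simpa using this
  -- neighborFinset u = univ.erase u
  have hNsub : G.neighborFinset u ⊆ Finset.univ.erase u := by
    intro v hv
    simp only [mem_neighborFinset] at hv
    exact Finset.mem_erase.mpr ⟨(G.ne_of_adj hv).symm, Finset.mem_univ v⟩
  have hNeq : G.neighborFinset u = Finset.univ.erase u := by
    apply Finset.eq_of_subset_of_card_le hNsub
    rw [Finset.card_erase_of_mem (Finset.mem_univ u), Finset.card_univ,
      ← hn, G.card_neighborFinset_eq_degree, hu]
  -- eigen equation at u
  have heigu := congrFun heig u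
  have hmv : (signlessLaplacian G).mulVec x u
      = (G.degree u : ℝ) * x u + ∑ v ∈ G.neighborFinset u, x v := by
    simp [signlessLaplacian, Matrix.add_mulVec, Matrix.mulVec_diagonal, Pi.add_apply]
  have key : ∑ v ∈ Finset.univ.erase u, x v = (qspec G - ((n:ℝ) - 1)) * x u := by
    have : (G.degree u : ℝ) * x u + ∑ v ∈ Finset.univ.erase u, x v = qspec G * x u := by
      rw [← hNeq, ← hmv, heigu]; simp
    have hdeg : (G.degree u : ℝ) = (n : ℝ) - 1 := by rw [hu, hcast]
    rw [hdeg] at this; linarith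
  -- Cauchy-Schwarz
  have hCS : (∑ v ∈ Finset.univ.erase u, x v) ^ 2
      ≤ ((n:ℝ) - 1) * ∑ v ∈ Finset.univ.erase u, x v ^ 2 := by
    have h := Finset.sum_mul_sq_le_sq_mul_sq (Finset.univ.erase u) (fun _ => (1:ℝ)) x
    simp only [one_mul, one_pow] at h
    have hcard : (((Finset.univ.erase u).card : ℝ)) = (n:ℝ) - 1 := by
      rw [Finset.card_erase_of_mem (Finset.mem_univ u), Finset.card_univ, ← hn, hcast]
    calc (∑ v ∈ Finset.univ.erase u, x v) ^ 2
        ≤ (∑ v ∈ Finset.univ.erase u, (1:ℝ)) * ∑ v ∈ Finset.univ.erase u, x v ^ 2 := by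
          simpa [sq] using h
      _ = ((n:ℝ) - 1) * ∑ v ∈ Finset.univ.erase u, x v ^ 2 := by
          rw [Finset.sum_const, nsmul_eq_mul, hcard]; ring
  have hsplit : ∑ v ∈ Finset.univ.erase u, x v ^ 2 = 1 - x u ^ 2 := by
    have := Finset.add_sum_erase Finset.univ (fun v => x v ^ 2) (Finset.mem_univ u)
    rw [hunit] at this; linarith
  rw [key, hsplit] at hCS
  have hs : 0 < qspec G - (n:ℝ) + 1 := by linarith
  have hn1' : (0:ℝ) ≤ (n:ℝ) - 1 := by
    have : (1:ℝ) ≤ (n:ℝ) := by exact_mod_cast hn1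
    linarith
  have hd : 0 < (qspec G - (n:ℝ) + 1) ^ 2 + ((n:ℝ) - 1) := by nlinarith
  rw [le_div_iff₀ hd]
  nlinarith [sq_nonneg (x u), hCS]
end
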